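/- Let μ > −1. For all integers k, j ≥ 1, (k+j+μ+1) Q^μ_{k,j}(z,w) = ((k+μ+1)(j+μ+1)/(μ+1)) Q^{μ+1}_{k,j}(z,w) − (kj/(μ+1)) Q^{μ+1}_{k−1,j−1}(z,w); when k = 0 or j = 0 the same identity holds with the last term absent. These are identities of bivariate polynomials in (z,w). -/

import Mathlib

/-!
For `j ≤ k`, `Q^μ_{k,j}(z, w) = z^(k-j) R_j^{(μ, k-j)}(2zw - 1)`, where `R` is the Jacobi polynomial
normalized by `R(1) = 1`, and `k < j` is the same with `z` and `w` exchanged. The identity is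
therefore the image under `t ↦ 2zw - 1` of the contiguous relation
`(2n+α+β+1) P_n^{(α,β)} = (n+α+β+1) P_n^{(α+1,β)} - (n+β) P_{n-1}^{(α+1,β)}`,
which is checked coefficientwise in the expansion in powers of `(t-1)/2`.
-/

noncomputable def jacobiP (α β : ℝ) (n : ℕ) : Polynomial ℝ :=
  (n.factorial : ℝ)⁻¹ •
    ∑ k ∈ Finset.range (n + 1),
      ((n.choose k : ℝ) * ((ascPochhammer ℝ (n - k)).eval ((k : ℝ) + α + 1)) *
          ((ascPochhammer ℝ k).eval ((n : ℝ) + α + β + 1))) •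
        ((Polynomial.X - 1) * Polynomial.C (2⁻¹ : ℝ)) ^ k

noncomputable def zernikeQ (μ : ℝ) (k j : ℕ) : MvPolynomial (Fin 2) ℂ :=
  if j ≤ k then
    MvPolynomial.C ((((j.factorial : ℝ) / ((ascPochhammer ℝ j).eval (μ + 1)) : ℝ) : ℂ)) *
      MvPolynomial.X 0 ^ (k - j) *
      Polynomial.aeval (2 * MvPolynomial.X 0 * MvPolynomial.X 1 - 1)
        (jacobiP μ ((k - j : ℕ) : ℝ) j)
  else
    MvPolynomial.C ((((k.factorial : ℝ) / ((ascPochhammer ℝ k).eval (μ + 1)) : ℝ) : ℂ)) *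
      MvPolynomial.X 1 ^ (j - k) *
      Polynomial.aeval (2 * MvPolynomial.X 0 * MvPolynomial.X 1 - 1)
        (jacobiP μ ((j - k : ℕ) : ℝ) k)

section Pochhammer

open Polynomial

variable {S : Type*} [CommSemiring S]

theorem ascPochhammer_succ_eval_left (n : ℕ) (x : S) :
    (ascPochhammer S (n + 1)).eval x = x * (ascPochhammer S n).eval (x + 1) := by
  rw [ascPochhammer_succ_left, eval_mul, eval_X, eval_comp, eval_add, eval_X, eval_one]

theorem mul_ascPochhammer_eval_add_one (n : ℕ) (x : S) :
    x * (ascPochhammer S n).eval (x + 1) = (ascPochhammer S n).eval x * (x + n) := by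
  rw [← ascPochhammer_succ_eval_left, ascPochhammer_succ_eval]

end Pochhammer

section Jacobi

open Polynomial Finset Nat

noncomputable def jacobiCoeff (α β : ℝ) (n i : ℕ) : ℝ :=
  n.choose i * (ascPochhammer ℝ (n - i)).eval (i + α + 1) *
    (ascPochhammer ℝ i).eval (n + α + β + 1)

theorem jacobiP_eq_sum (α β : ℝ) (n : ℕ) :
    jacobiP α β n =
      ∑ i ∈ range (n + 1), ((n ! : ℝ)⁻¹ * jacobiCoeff α β n i) • ((X - 1) * C 2⁻¹) ^ i := by
  simp only [jacobiP, smul_sum, smul_smul, jacobiCoeff]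

theorem jacobiCoeff_succ_self (α β : ℝ) (n : ℕ) : jacobiCoeff α β n (n + 1) = 0 := by
  simp [jacobiCoeff, choose_succ_self]

theorem jacobiCoeff_contiguous (α β : ℝ) {n i : ℕ} (hi : i ≤ n + 1) :
    (2 * n + α + β + 3) * jacobiCoeff α β (n + 1) i =
      (n + α + β + 2) * jacobiCoeff (α + 1) β (n + 1) i -
        (n + 1) * (n + β + 1) * jacobiCoeff (α + 1) β n i := by
  rcases hi.lt_or_eq with hi | rfl
  · obtain ⟨d, rfl⟩ : ∃ d, n = i + d := ⟨n - i, by omega⟩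
    have hd1 : i + d + 1 - i = d + 1 := by omega
    have hd : i + d - i = d := by omega
    simp only [jacobiCoeff, hd1, hd]
    -- with `x = n + α + β + 2`, all three terms are multiples of `(i+α+2)_d (x)_i`
    set x : ℝ := (i + d + 1 : ℕ) + α + β + 1 with hx
    rw [show ((i + d + 1 : ℕ) + (α + 1) + β + 1 : ℝ) = x + 1 by simp only [x]; ring,
      show ((i + d : ℕ) + (α + 1) + β + 1 : ℝ) = x by simp only [x]; push_cast; ring]
    set p := (ascPochhammer ℝ d).eval ((i : ℝ) + (α + 1) + 1)
    have h1 : (ascPochhammer ℝ (d + 1)).eval ((i : ℝ) + α + 1) = (i + α + 1) * p := by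
      rw [ascPochhammer_succ_eval_left, add_assoc (i : ℝ) α 1]
    have h2 : (ascPochhammer ℝ (d + 1)).eval ((i : ℝ) + (α + 1) + 1) = p * (i + α + 2 + d) := by
      rw [ascPochhammer_succ_eval]; ring
    have h3 := mul_ascPochhammer_eval_add_one i x
    have h4 : ((i + d).choose i * (i + d + 1) : ℝ) = (i + d + 1).choose i * (d + 1) := by
      exact_mod_cast (choose_mul_succ_eq (i + d) i).trans (by rw [hd1])
    set C₁ : ℝ := Nat.cast ((i + d + 1).choose i)
    set q := (ascPochhammer ℝ i).eval x
    set r := (ascPochhammer ℝ i).eval (x + 1)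
    rw [h1, h2]
    clear_value x p q r C₁
    subst hx
    push_cast at h3 h4 ⊢
    linear_combination (-(C₁ * p * (i + α + 2 + d))) * h3 + ((i + d : ℝ) + β + 1) * p * q * h4
  · rw [jacobiCoeff_succ_self, mul_zero, sub_zero]
    simp only [jacobiCoeff, choose_self, Nat.sub_self, ascPochhammer_zero, eval_one, cast_one,
      one_mul]
    rw [show ((n + 1 : ℕ) + (α + 1) + β + 1 : ℝ) = (n + 1 : ℕ) + α + β + 1 + 1 by ring,
      show (n + α + β + 2 : ℝ) = (n + 1 : ℕ) + α + β + 1 by push_cast; ring,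
      mul_ascPochhammer_eval_add_one]
    push_cast
    ring

theorem jacobiP_contiguous (α β : ℝ) (n : ℕ) :
    (2 * n + α + β + 3) • jacobiP α β (n + 1) =
      (n + α + β + 2) • jacobiP (α + 1) β (n + 1) - (n + β + 1) • jacobiP (α + 1) β n := by
  have hlow : jacobiP (α + 1) β n = ∑ i ∈ range (n + 2),
      ((n ! : ℝ)⁻¹ * jacobiCoeff (α + 1) β n i) • ((X - 1) * C 2⁻¹) ^ i := by
    rw [sum_range_succ, jacobiCoeff_succ_self, mul_zero, zero_smul, add_zero, jacobiP_eq_sum]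
  rw [hlow, jacobiP_eq_sum, jacobiP_eq_sum]
  simp only [smul_sum, smul_smul, ← sum_sub_distrib, ← sub_smul]
  refine sum_congr rfl fun i hi => congrArg (· • _) ?_
  have hfac : ((n + 1)! : ℝ) = (n + 1) * n ! := by push_cast [factorial_succ]; ring
  have hn : (n ! : ℝ) ≠ 0 := by positivity
  rw [hfac]
  field_simp
  linear_combination jacobiCoeff_contiguous α β (mem_range_succ_iff.mp hi)

end Jacobi

section NormJacobi

open Polynomial Nat

/-- Normalized so that its value at `1` is `1`. -/
noncomputable def normJacobiP (α β : ℝ) (n : ℕ) : ℝ[X] :=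
  (n ! / (ascPochhammer ℝ n).eval (α + 1)) • jacobiP α β n

theorem normJacobiP_zero (α β : ℝ) : normJacobiP α β 0 = 1 := by
  simp [normJacobiP, jacobiP]

theorem normJacobiP_contiguous {α : ℝ} (hα : -1 < α) (β : ℝ) (n : ℕ) :
    (2 * n + α + β + 3) • normJacobiP α β (n + 1) =
      ((n + α + β + 2) * (n + α + 2) / (α + 1)) • normJacobiP (α + 1) β (n + 1) -
        ((n + 1) * (n + β + 1) / (α + 1)) • normJacobiP (α + 1) β n := by
  have hα1 : α + 1 ≠ 0 := by linarith
  have hpos : ∀ m, 0 < (ascPochhammer ℝ m).eval (α + 1 + 1) :=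
    fun m => ascPochhammer_pos m _ (by linarith)
  have hc := (hpos n).ne'
  have hb := (hpos (n + 1)).ne'
  have hA := ascPochhammer_succ_eval_left n (α + 1)
  have hB := mul_ascPochhammer_eval_add_one (n + 1) (α + 1)
  have ha : (ascPochhammer ℝ (n + 1)).eval (α + 1) ≠ 0 := by rw [hA]; exact mul_ne_zero hα1 hc
  have hfac : ((n + 1)! : ℝ) = (n + 1) * n ! := by push_cast [factorial_succ]; ring
  set s : ℝ := (n + 1)! / (ascPochhammer ℝ (n + 1)).eval (α + 1)
  have hs₁ : (n + α + β + 2) * (n + α + 2) / (α + 1) *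
      ((n + 1)! / (ascPochhammer ℝ (n + 1)).eval (α + 1 + 1)) = s * (n + α + β + 2) := by
    simp only [s]
    field_simp
    push_cast at hB
    linear_combination (-(n + α + β + 2)) * hB
  have hs₂ : (n + 1) * (n + β + 1) / (α + 1) * (n ! / (ascPochhammer ℝ n).eval (α + 1 + 1)) =
      s * (n + β + 1) := by
    simp only [s]
    rw [hfac, hA]
    field_simp
  calc (2 * n + α + β + 3) • normJacobiP α β (n + 1)
      = s • ((2 * n + α + β + 3) • jacobiP α β (n + 1)) := by
        rw [normJacobiP, smul_comm]
    _ = s • ((n + α + β + 2) • jacobiP (α + 1) β (n + 1) - (n + β + 1) • jacobiP (α + 1) β n) := by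
        rw [jacobiP_contiguous]
    _ = _ := by
        rw [normJacobiP, normJacobiP, smul_smul, smul_smul, hs₁, hs₂, smul_sub, smul_smul,
          smul_smul]

end NormJacobi

section Zernike

open Polynomial

theorem MvPolynomial.C_ofReal_mul {σ : Type*} (r : ℝ) (p : MvPolynomial σ ℂ) :
    MvPolynomial.C (r : ℂ) * p = r • p := by
  rw [MvPolynomial.C_mul']
  exact algebraMap_smul ℂ r p

theorem zernikeQ_of_le (μ : ℝ) {k j : ℕ} (h : j ≤ k) :
    zernikeQ μ k j = MvPolynomial.X 0 ^ (k - j) *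
      aeval (2 * MvPolynomial.X 0 * MvPolynomial.X 1 - 1) (normJacobiP μ (k - j : ℕ) j) := by
  rw [zernikeQ, if_pos h, normJacobiP, map_smul, MvPolynomial.C_ofReal_mul, mul_smul_comm,
    smul_mul_assoc]

theorem zernikeQ_of_lt (μ : ℝ) {k j : ℕ} (h : k < j) :
    zernikeQ μ k j = MvPolynomial.X 1 ^ (j - k) *
      aeval (2 * MvPolynomial.X 0 * MvPolynomial.X 1 - 1) (normJacobiP μ (j - k : ℕ) k) := by
  rw [zernikeQ, if_neg h.not_ge, normJacobiP, map_smul, MvPolynomial.C_ofReal_mul, mul_smul_comm,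
    smul_mul_assoc]

theorem zernikeQ_zero_right (μ : ℝ) (k : ℕ) : zernikeQ μ k 0 = MvPolynomial.X 0 ^ k := by
  simp [zernikeQ_of_le μ k.zero_le, normJacobiP_zero]

theorem zernikeQ_zero_left (μ : ℝ) (j : ℕ) : zernikeQ μ 0 j = MvPolynomial.X 1 ^ j := by
  rcases j.eq_zero_or_pos with rfl | hj
  · simp [zernikeQ_zero_right]
  · simp [zernikeQ_of_lt μ hj, normJacobiP_zero]

theorem pow_mul_aeval_normJacobiP_contiguous {A : Type*} [CommRing A] [Algebra ℝ A] {μ : ℝ}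
    (hμ : -1 < μ) (Y t : A) {k j : ℕ} (hj : 1 ≤ j) (hjk : j ≤ k) :
    (k + j + μ + 1 : ℝ) • (Y ^ (k - j) * aeval t (normJacobiP μ (k - j : ℕ) j)) =
      ((k + μ + 1) * (j + μ + 1) / (μ + 1) : ℝ) •
          (Y ^ (k - j) * aeval t (normJacobiP (μ + 1) (k - j : ℕ) j)) -
        (k * j / (μ + 1) : ℝ) •
          (Y ^ (k - j) * aeval t (normJacobiP (μ + 1) (k - j : ℕ) (j - 1))) := by
  obtain ⟨n, rfl⟩ : ∃ n, j = n + 1 := ⟨j - 1, by omega⟩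
  obtain ⟨m, rfl⟩ : ∃ m, k = n + 1 + m := ⟨k - (n + 1), by omega⟩
  simp only [← mul_smul_comm, ← mul_sub, ← map_smul, ← map_sub, Nat.add_sub_cancel,
    Nat.add_sub_cancel_left]
  congr 2
  have key := normJacobiP_contiguous hμ (m : ℝ) n
  push_cast
  linear_combination (norm := module) key

end Zernike

open MvPolynomial in
theorem zernike_connection (μ : ℝ) (hμ : μ > -1) (k j : ℕ) :
    (1 ≤ k → 1 ≤ j →
      C ((((k : ℝ) + (j : ℝ) + μ + 1 : ℝ)) : ℂ) * zernikeQ μ k j =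
        C (((((k : ℝ) + μ + 1) * ((j : ℝ) + μ + 1) / (μ + 1) : ℝ)) : ℂ) *
            zernikeQ (μ + 1) k j -
          C ((((k : ℝ) * (j : ℝ) / (μ + 1) : ℝ)) : ℂ) *
            zernikeQ (μ + 1) (k - 1) (j - 1)) ∧
    (k = 0 ∨ j = 0 →
      C ((((k : ℝ) + (j : ℝ) + μ + 1 : ℝ)) : ℂ) * zernikeQ μ k j =
        C (((((k : ℝ) + μ + 1) * ((j : ℝ) + μ + 1) / (μ + 1) : ℝ)) : ℂ) *
          zernikeQ (μ + 1) k j) := by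
  have hμ₁ : μ + 1 ≠ 0 := by linarith
  simp only [C_ofReal_mul]
  refine ⟨fun hk hj => ?_, ?_⟩
  · rcases le_or_gt j k with hjk | hkj
    · rw [zernikeQ_of_le μ hjk, zernikeQ_of_le _ hjk, zernikeQ_of_le _ (Nat.sub_le_sub_right hjk 1),
        Nat.sub_sub_sub_cancel_right hj]
      exact pow_mul_aeval_normJacobiP_contiguous hμ (X 0) _ hj hjk
    · rw [zernikeQ_of_lt μ hkj, zernikeQ_of_lt _ hkj, zernikeQ_of_lt _ (by omega : k - 1 < j - 1),
        Nat.sub_sub_sub_cancel_right hk, add_comm (k : ℝ), mul_comm ((k : ℝ) + μ + 1),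
        mul_comm (k : ℝ)]
      exact pow_mul_aeval_normJacobiP_contiguous hμ (X 1) _ hk hkj.le
  · rintro (rfl | rfl)
    · rw [zernikeQ_zero_left, zernikeQ_zero_left]
      congr 1
      field_simp
      push_cast
      ring
    · rw [zernikeQ_zero_right, zernikeQ_zero_right]
      congr 1
      field_simp
      push_cast
      ring
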